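/- For the 15-qubit graph state |Φ_res⟩ whose graph consists of 8 target vertices and 7 auxiliary vertices, where each auxiliary vertex a_i is adjacent to exactly the pair of target vertices corresponding to gate i of the circuit, measuring each auxiliary qubit a_i (after applying exp(iα_i X) on it) in the Z basis and applying outcome-dependent Z⊗Z corrections on its two neighbors deterministically yields the state ∏_i exp(iα_i Z⊗Z on pair i)|+⟩^⊗8 on the target qubits. -/

import Mathlib

open Matrix Finset

/-- The 15 qubits: 8 target qubits and 7 auxiliary qubits. -/
abbrev Q15 := Fin 8 ⊕ Fin 7

/-- Pauli `X`. -/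
noncomputable def PauliX : Matrix (Fin 2) (Fin 2) ℂ := !![0, 1; 1, 0]

/-- Eigenvalue of Pauli `Z` on a computational-basis qubit value. -/
def zsign : Fin 2 → ℂ := fun t => if t = 0 then 1 else -1

/-- Phase of the (diagonal) controlled-`Z` gate on basis values `a`, `b`. -/
def czsign : Fin 2 → Fin 2 → ℂ := fun a b => if a = 1 ∧ b = 1 then -1 else 1

/-- The 15-qubit graph state `|Φ_res⟩ = (∏_{edges} CZ)|+⟩^{⊗15}` for the graph in which each
auxiliary vertex `i` is adjacent exactly to the two target vertices `(p i).1`, `(p i).2` of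
gate `i` (all `CZ` gates are diagonal, giving these amplitudes). -/
noncomputable def graphStateRes (p : Fin 7 → Fin 8 × Fin 8) : (Q15 → Fin 2) → ℂ :=
  fun x => ((Real.sqrt 2 : ℂ)⁻¹) ^ 15 *
    ∏ i : Fin 7, czsign (x (Sum.inr i)) (x (Sum.inl (p i).1)) *
      czsign (x (Sum.inr i)) (x (Sum.inl (p i).2))

/-- The operator applying `exp(iα_i X)` on each auxiliary qubit `i` (identity on targets). -/
noncomputable def rotOp (α : Fin 7 → ℝ) : Matrix (Q15 → Fin 2) (Q15 → Fin 2) ℂ :=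
  Matrix.of fun x y =>
    (if ∀ t : Fin 8, x (Sum.inl t) = y (Sum.inl t) then 1 else 0) *
    ∏ i : Fin 7,
      (NormedSpace.exp ((Complex.I * ((α i : ℝ) : ℂ)) • PauliX)) (x (Sum.inr i)) (y (Sum.inr i))

/-- (Unnormalized) state of the 8 target qubits after measuring all auxiliary qubits in the
`Z` basis with outcome string `s`. -/
noncomputable def postMeasRes (p : Fin 7 → Fin 8 × Fin 8) (α : Fin 7 → ℝ)
    (s : Fin 7 → Fin 2) : (Fin 8 → Fin 2) → ℂ :=
  fun y => ((rotOp α).mulVec (graphStateRes p)) (Sum.elim y s)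

/-- The outcome-dependent correction: for each `i` with outcome `1`, `Z⊗Z` on the two
neighbors `(p i).1`, `(p i).2` of the auxiliary qubit `i`. -/
noncomputable def corrOp (p : Fin 7 → Fin 8 × Fin 8) (s : Fin 7 → Fin 2) :
    Matrix (Fin 8 → Fin 2) (Fin 8 → Fin 2) ℂ :=
  Matrix.of fun y y' => if y = y' then
    ∏ i : Fin 7, (if s i = 1 then zsign (y (p i).1) * zsign (y (p i).2) else 1) else 0

/-- `Z ⊗ Z` on target qubits `a`, `b` (identity elsewhere). -/
def ZZfull (a b : Fin 8) : Matrix (Fin 8 → Fin 2) (Fin 8 → Fin 2) ℂ :=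
  Matrix.of fun x y => if x = y then zsign (x a) * zsign (x b) else 0

/-- `|+⟩^{⊗8}`. -/
noncomputable def plus8 : (Fin 8 → Fin 2) → ℂ := fun _ => ((Real.sqrt 2 : ℂ)⁻¹) ^ 8

/-- The target state `∏_i exp(iα_i Z⊗Z on pair p i) |+⟩^{⊗8}` (the gates commute). -/
noncomputable def targetState (p : Fin 7 → Fin 8 × Fin 8) (α : Fin 7 → ℝ) :
    (Fin 8 → Fin 2) → ℂ :=
  ((((List.finRange 7).reverse.map fun i =>
      NormedSpace.exp ((Complex.I * ((α i : ℝ) : ℂ)) • ZZfull (p i).1 (p i).2)).prod)).mulVec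
    plus8

/-! ### Auxiliary lemmas -/

noncomputable def Umat : Matrix (Fin 2) (Fin 2) ℂ := !![1, 1; 1, -1]

lemma Umat_isUnit : IsUnit Umat := by
  rw [Matrix.isUnit_iff_isUnit_det, Umat, Matrix.det_fin_two_of]
  norm_num

lemma Umat_inv : Umat⁻¹ = (2⁻¹ : ℂ) • Umat := by
  apply Matrix.inv_eq_right_inv
  ext i j
  fin_cases i <;> fin_cases j <;>
    norm_num [Umat, Matrix.mul_apply, Fin.sum_univ_two, Matrix.one_apply]

lemma pauliX_conj (z : ℂ) :
    z • PauliX = Umat * Matrix.diagonal ![z, -z] * Umat⁻¹ := by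
  rw [Umat_inv]
  ext i j
  fin_cases i <;> fin_cases j <;>
    simp [Umat, PauliX, Matrix.mul_apply, Fin.sum_univ_two, Matrix.vecMul_diagonal,
      Matrix.vecHead, Matrix.vecTail] <;> ring

lemma exp_pauliX (a : ℝ) :
    NormedSpace.exp ((Complex.I * (a : ℝ)) • PauliX) =
      !![Complex.cos a, Complex.I * Complex.sin a;
         Complex.I * Complex.sin a, Complex.cos a] := by
  rw [pauliX_conj, Matrix.exp_conj _ _ Umat_isUnit,
    Matrix.exp_diagonal, Umat_inv]
  have h1 : NormedSpace.exp (Complex.I * (a : ℝ)) =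
      Complex.cos a + Complex.sin a * Complex.I := by
    rw [← Complex.exp_eq_exp_ℂ, mul_comm, Complex.exp_mul_I]
  have h2 : NormedSpace.exp (-(Complex.I * (a : ℝ))) =
      Complex.cos a - Complex.sin a * Complex.I := by
    rw [← Complex.exp_eq_exp_ℂ, show -(Complex.I * (a:ℝ)) = (-a : ℂ) * Complex.I by ring,
      Complex.exp_mul_I, Complex.cos_neg, Complex.sin_neg]
    ring
  ext i j
  fin_cases i <;> fin_cases j <;>
    simp [Umat, Matrix.mul_apply, Fin.sum_univ_two, Matrix.vecMul_diagonal, Pi.exp_def,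
      Matrix.vecHead, Matrix.vecTail, Matrix.diagonal_apply, h1, h2] <;> ring

lemma ZZfull_eq_diagonal (a b : Fin 8) :
    ZZfull a b = Matrix.diagonal (fun x => zsign (x a) * zsign (x b)) := rfl

lemma exp_ZZ (c : ℝ) (a b : Fin 8) :
    NormedSpace.exp ((Complex.I * (c : ℝ)) • ZZfull a b) =
      Matrix.diagonal
        (fun x => Complex.exp (Complex.I * c * (zsign (x a) * zsign (x b)))) := by
  have h : (Complex.I * (c : ℝ)) • ZZfull a b =
      Matrix.diagonal (fun x => Complex.I * c * (zsign (x a) * zsign (x b))) := by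
    rw [ZZfull_eq_diagonal]
    ext x y
    by_cases hxy : x = y <;>
      simp [Matrix.diagonal_apply, hxy, Matrix.smul_apply, smul_eq_mul, mul_assoc]
  rw [h, Matrix.exp_diagonal, Pi.exp_def]
  simp [← Complex.exp_eq_exp_ℂ]

lemma diag_list_prod {ι : Type*} {n : Type*} [Fintype n] [DecidableEq n]
    (l : List ι) (d : ι → n → ℂ) :
    (l.map fun i => Matrix.diagonal (d i)).prod =
      Matrix.diagonal fun x => (l.map fun i => d i x).prod := by
  induction l with
  | nil => simp
  | cons h t ih =>
      simp only [List.map_cons, List.prod_cons, ih, Matrix.diagonal_mul_diagonal]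

lemma targetState_apply (p : Fin 7 → Fin 8 × Fin 8) (α : Fin 7 → ℝ) (y : Fin 8 → Fin 2) :
    targetState p α y =
      (∏ i : Fin 7,
        Complex.exp (Complex.I * α i * (zsign (y (p i).1) * zsign (y (p i).2)))) *
        ((Real.sqrt 2 : ℂ)⁻¹) ^ 8 := by
  unfold targetState plus8
  simp only [exp_ZZ, diag_list_prod, Matrix.mulVec_diagonal]
  congr 1
  rw [List.map_reverse, List.prod_reverse, ← Fin.prod_univ_def]

lemma zsign_sq (b : Fin 2) : zsign b * zsign b = 1 := by
  fin_cases b <;> norm_num [zsign]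

lemma key_sum (a : ℝ) (t b1 b2 : Fin 2) :
    (if t = 1 then zsign b1 * zsign b2 else 1) *
      ∑ v : Fin 2, (NormedSpace.exp ((Complex.I * (a : ℝ)) • PauliX)) t v *
        (czsign v b1 * czsign v b2) =
    Complex.exp (Complex.I * a * (zsign b1 * zsign b2)) := by
  rw [exp_pauliX]
  have h1 : Complex.exp (Complex.I * a) = Complex.cos a + Complex.I * Complex.sin a := by
    rw [mul_comm, Complex.exp_mul_I]; ring
  have h3 : Complex.exp (-(Complex.I * a)) = Complex.cos a - Complex.I * Complex.sin a := by
    rw [show -(Complex.I * (a : ℂ)) = (-a : ℂ) * Complex.I by ring,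
      Complex.exp_mul_I, Complex.cos_neg, Complex.sin_neg]
    ring
  fin_cases t <;> fin_cases b1 <;> fin_cases b2 <;>
    simp [zsign, czsign, Fin.sum_univ_two, h1, h3] <;> ring

/-- measuring each auxiliary qubit of the 15-qubit graph state (after applying
`exp(iα_i X)` to it) in the `Z` basis and applying the outcome-dependent `Z⊗Z` corrections
on its two neighbors deterministically yields, for every outcome string `s` (each occurring
with nonzero amplitude), the state `∏_i exp(iα_i Z⊗Z)|+⟩^{⊗8}` on the target qubits. -/
theorem graphState_measurement_protocol
    (p : Fin 7 → Fin 8 × Fin 8) (hp : ∀ i, (p i).1 ≠ (p i).2) (α : Fin 7 → ℝ) :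
    ∀ s : Fin 7 → Fin 2, ∃ c : ℂ, c ≠ 0 ∧
      (corrOp p s).mulVec (postMeasRes p α s) = c • targetState p α := by
  intro s
  have hs2 : ((Real.sqrt 2 : ℂ))⁻¹ ≠ 0 := by
    simp only [ne_eq, inv_eq_zero, Complex.ofReal_eq_zero]
    positivity
  refine ⟨((Real.sqrt 2 : ℂ)⁻¹) ^ 7, pow_ne_zero _ hs2, ?_⟩
  funext y
  -- Evaluate the post-measurement state.
  have hpost : postMeasRes p α s y =
      ((Real.sqrt 2 : ℂ)⁻¹) ^ 15 *
        ∏ i : Fin 7, ∑ v : Fin 2,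
          (NormedSpace.exp ((Complex.I * ((α i : ℝ) : ℂ)) • PauliX)) (s i) v *
            (czsign v (y (p i).1) * czsign v (y (p i).2)) := by
    unfold postMeasRes rotOp graphStateRes
    rw [Matrix.mulVec]
    simp only [dotProduct]
    rw [← Equiv.sum_comp (Equiv.sumArrowEquivProdArrow (Fin 8) (Fin 7) (Fin 2)).symm,
      Fintype.sum_prod_type]
    rw [Finset.sum_eq_single_of_mem y (Finset.mem_univ y)]
    · simp only [Equiv.sumArrowEquivProdArrow, Equiv.coe_fn_symm_mk, Sum.elim_inl,
        Sum.elim_inr, Matrix.of_apply]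
      simp only [forall_true_iff, if_true, one_mul]
      rw [Finset.prod_univ_sum, Fintype.piFinset_univ, Finset.mul_sum]
      refine Finset.sum_congr rfl fun v _ => ?_
      rw [mul_left_comm, ← Finset.prod_mul_distrib]
    · intro b _ hb
      apply Finset.sum_eq_zero
      intro v _
      simp only [Equiv.sumArrowEquivProdArrow, Equiv.coe_fn_symm_mk, Sum.elim_inl,
        Sum.elim_inr, Matrix.of_apply]
      have e : ∀ {d : Decidable (∀ t : Fin 8, y t = b t)}, @ite ℂ _ d 1 0 = 0 :=
        fun {d} => @if_neg _ d (fun h => hb (funext fun t => (h t).symm)) _ _ _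
      exact mul_eq_zero_of_left (mul_eq_zero_of_left e _) _
  have hcorr : corrOp p s = Matrix.diagonal
      (fun y => ∏ i : Fin 7,
        if s i = 1 then zsign (y (p i).1) * zsign (y (p i).2) else 1) := rfl
  rw [hcorr, Matrix.mulVec_diagonal, hpost, Pi.smul_apply, targetState_apply,
    smul_eq_mul]
  rw [mul_left_comm, ← Finset.prod_mul_distrib]
  simp_rw [key_sum]
  ring
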